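/- Noiseless superset correctness: if y = Ax₀ with supp x₀ = T, m > 2|T|, and Ω = {k : sin∠(a_k^L, Ran Y) = 0} with |T|+1 ≤ L ≤ m−|T|−1, then Ω = T exactly (the superset equals the true support), and in particular |Ω| ≤ m so the final least-squares step is well posed. -/

import Mathlib

noncomputable def partialFourier (m n : ℕ) : Matrix (Fin m) (Fin n) ℂ :=
  Matrix.of fun j k => Complex.exp (2 * Real.pi * Complex.I * j * k / n)

def hankel (m L : ℕ) (y : Fin m → ℂ) : Matrix (Fin L) (Fin (m - L)) ℂ :=
  Matrix.of fun p q => y ⟨p.1 + q.1, by have := p.2; have := q.2; omega⟩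

noncomputable def sinAngle {L : ℕ} (v : EuclideanSpace ℂ (Fin L))
    (V : Submodule ℂ (EuclideanSpace ℂ (Fin L))) : ℝ :=
  ‖v - (V.orthogonalProjection v : EuclideanSpace ℂ (Fin L))‖ / ‖v‖

noncomputable def colSpan {L M : ℕ} (Y : Matrix (Fin L) (Fin M) ℂ) :
    Submodule ℂ (EuclideanSpace ℂ (Fin L)) :=
  Submodule.span ℂ (Set.range fun q : Fin M => (WithLp.toLp 2 (fun p => Y p q) : EuclideanSpace ℂ (Fin L)))

/-! With the Fourier nodes `z_k = e^{2πik/n}` one has `y_j = ∑_{k∈T} x₀_k z_k^j`, so the Hankel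
matrix factors as `Y = V_L diag(x₀) V_{m-L}ᵀ` with Vandermonde factors `V_N = (z_k^p)_{p<N, k∈T}`.
Since `|T| ≤ m - L` and the nodes are distinct, `V_{m-L}ᵀ` has independent rows: a vector
orthogonal to every column of `Y` is orthogonal to every `a_k^L`, `k ∈ T`, whence
`Ran Y = span {a_k^L : k ∈ T}`. Since `|T| + 1 ≤ L`, the vectors `a_k^L` for `k ∈ T ∪ {k'}` are
independent, so `a_{k'}^L` lies in that span only if `k' ∈ T`; and `sin∠(a, V) = 0` exactly
when `a ∈ V`. -/

open Submodule

section Vandermonde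

variable {K ι : Type*} [Field K]

theorem eq_zero_of_forall_sum_mul_pow_eq_zero {z : ι → K} {s : Finset ι} (hz : Set.InjOn z s)
    {N : ℕ} (hN : s.card ≤ N) {d : ι → K} (h : ∀ q < N, ∑ k ∈ s, d k * z k ^ q = 0) :
    ∀ k ∈ s, d k = 0 := by
  let e : Fin s.card ≃ s := s.equivFin.symm
  have hinj : Function.Injective fun i => z (e i) := hz.injective.comp e.injective
  have hd : (fun i => d (e i)) = 0 := by
    refine Matrix.eq_zero_of_forall_pow_sum_mul_pow_eq_zero hinj fun q => ?_
    rw [e.sum_comp (fun k : s => d k * z k ^ (q : ℕ)),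
      Finset.sum_coe_sort s (fun k => d k * z k ^ (q : ℕ))]
    exact h q (by omega)
  intro k hk
  simpa [e] using congrFun hd (e.symm ⟨k, hk⟩)

end Vandermonde

section PowVec

variable {𝕜 ι : Type*} [RCLike 𝕜]

noncomputable def powVec (N : ℕ) (z : 𝕜) : EuclideanSpace 𝕜 (Fin N) :=
  WithLp.toLp 2 fun q => z ^ (q : ℕ)

@[simp]
theorem powVec_apply (N : ℕ) (z : 𝕜) (q : Fin N) : powVec N z q = z ^ (q : ℕ) := rfl

theorem powVec_ne_zero {N : ℕ} (hN : 0 < N) (z : 𝕜) : powVec N z ≠ 0 := fun h => by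
  simpa using congrArg (· ⟨0, hN⟩) h

theorem linearIndepOn_powVec {z : ι → 𝕜} {s : Finset ι} (hz : Set.InjOn z s) {N : ℕ}
    (hN : s.card ≤ N) : LinearIndepOn 𝕜 (fun k => powVec N (z k)) (s : Set ι) := by
  refine linearIndepOn_finset_iff.mpr fun d hd => ?_
  refine eq_zero_of_forall_sum_mul_pow_eq_zero hz hN fun q hq => ?_
  simpa using congrArg (· ⟨q, hq⟩) hd

theorem powVec_mem_span_image_iff {z : ι → 𝕜} (hz : Function.Injective z) {s : Finset ι} {N : ℕ}
    (hN : s.card < N) (k : ι) :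
    powVec N (z k) ∈ span 𝕜 ((fun k => powVec N (z k)) '' s) ↔ k ∈ s := by
  classical
  rw [(linearIndepOn_powVec hz.injOn hN.le).mem_span_iff]
  refine ⟨fun h => h ?_, fun h _ => h⟩
  simpa using linearIndepOn_powVec (s := insert k s) hz.injOn (by grind [Finset.card_insert_le])

end PowVec

section Hankel

variable {ι : Type*}

theorem sinAngle_eq_zero_iff {L : ℕ} {v : EuclideanSpace ℂ (Fin L)} (hv : v ≠ 0)
    (V : Submodule ℂ (EuclideanSpace ℂ (Fin L))) : sinAngle v V = 0 ↔ v ∈ V := by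
  rw [sinAngle, div_eq_zero_iff, norm_eq_zero, norm_eq_zero, or_iff_left hv, sub_eq_zero,
    eq_comm]
  exact V.starProjection_eq_self_iff

theorem toLp_hankel_col_eq_sum {m L : ℕ} {z c : ι → ℂ} {T : Finset ι} {y : Fin m → ℂ}
    (hy : ∀ j : Fin m, y j = ∑ k ∈ T, c k * z k ^ (j : ℕ)) (q : Fin (m - L)) :
    WithLp.toLp 2 (fun p => hankel m L y p q) =
      ∑ k ∈ T, (c k * z k ^ (q : ℕ)) • powVec L (z k) := by
  ext p
  simp only [hankel, Matrix.of_apply, hy, WithLp.ofLp_sum, Finset.sum_apply]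
  refine Finset.sum_congr rfl fun k _ => ?_
  simp only [pow_add, PiLp.smul_apply, powVec_apply, smul_eq_mul]
  ring

theorem colSpan_hankel_eq_span {m L : ℕ} {z c : ι → ℂ} {T : Finset ι} (hz : Set.InjOn z T)
    (hc : ∀ k ∈ T, c k ≠ 0) (hT : T.card ≤ m - L) {y : Fin m → ℂ}
    (hy : ∀ j : Fin m, y j = ∑ k ∈ T, c k * z k ^ (j : ℕ)) :
    colSpan (hankel m L y) = span ℂ ((fun k => powVec L (z k)) '' T) := by
  refine le_antisymm ?_ ?_
  · refine span_le.mpr ?_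
    rintro _ ⟨q, rfl⟩
    beta_reduce
    rw [SetLike.mem_coe, toLp_hankel_col_eq_sum hy]
    exact sum_mem fun k hk => smul_mem _ _ (subset_span ⟨k, hk, rfl⟩)
  · refine span_le.mpr ?_
    rintro _ ⟨k₀, hk₀, rfl⟩
    rw [SetLike.mem_coe, ← (colSpan _).orthogonal_orthogonal, mem_orthogonal]
    intro u hu
    have hdual : ∀ q < m - L, ∑ k ∈ T, (c k * inner ℂ u (powVec L (z k))) * z k ^ q = 0 := by
      intro q hq
      have := (mem_orthogonal' _ u).mp hu _ (subset_span ⟨⟨q, hq⟩, rfl⟩)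
      beta_reduce at this
      rw [toLp_hankel_col_eq_sum hy, inner_sum] at this
      simp_rw [inner_smul_right] at this
      rw [← this]
      exact Finset.sum_congr rfl fun k _ => by ring
    exact (mul_eq_zero.mp (eq_zero_of_forall_sum_mul_pow_eq_zero hz hT hdual k₀ hk₀)).resolve_left
      (hc k₀ hk₀)

end Hankel

section Fourier

open Complex

noncomputable def fourierNode (n : ℕ) (k : Fin n) : ℂ := exp (2 * Real.pi * I / n) ^ (k : ℕ)

theorem fourierNode_injective {n : ℕ} (hn : n ≠ 0) : Function.Injective (fourierNode n) :=
  fun k k' h => Fin.ext ((isPrimitiveRoot_exp n hn).pow_inj k.2 k'.2 h)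

theorem partialFourier_apply (m n : ℕ) (j : Fin m) (k : Fin n) :
    partialFourier m n j k = fourierNode n k ^ (j : ℕ) := by
  rw [fourierNode, ← pow_mul, ← exp_nat_mul, partialFourier, Matrix.of_apply]
  congr 1
  push_cast
  ring

theorem partialFourier_mulVec_eq_sum {m n : ℕ} {x : Fin n → ℂ} {T : Finset (Fin n)}
    (hx : ∀ k ∉ T, x k = 0) (j : Fin m) :
    (partialFourier m n).mulVec x j = ∑ k ∈ T, x k * fourierNode n k ^ (j : ℕ) := by
  rw [Matrix.mulVec, dotProduct, ← Finset.sum_subset T.subset_univ fun k _ hk => by simp [hx k hk]]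
  exact Finset.sum_congr rfl fun k _ => by rw [partialFourier_apply, mul_comm]

end Fourier

/-- Noiseless superset correctness: with `y = A x₀`, `supp x₀ = T`, `m > 2|T|` and
`|T|+1 ≤ L ≤ m−|T|−1`, the identified set
`Ω = {k : sin∠(a_k^L, Ran Hankel(y)) = 0}` equals `T` exactly;
in particular `|Ω| = |T| ≤ m`, so the final least-squares step is well posed. -/
theorem superset_equals_support (m n L : ℕ) (hmn : m ≤ n)
    (x₀ : Fin n → ℂ) (T : Finset (Fin n)) (hsupp : ∀ k, x₀ k ≠ 0 ↔ k ∈ T)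
    (hm : 2 * T.card < m) (hL1 : T.card + 1 ≤ L) (hL2 : L ≤ m - T.card - 1)
    (y : Fin m → ℂ) (hy : y = (partialFourier m n).mulVec x₀) :
    {k : Fin n |
        sinAngle (WithLp.toLp 2 (fun p : Fin L => partialFourier m n ⟨p.1, by have := p.2; omega⟩ k) :
          EuclideanSpace ℂ (Fin L)) (colSpan (hankel m L y)) = 0} = ↑T ∧
      T.card ≤ m := by
  have hnode := fourierNode_injective (n := n) (by omega)
  have hspan : colSpan (hankel m L y) = span ℂ ((fun k => powVec L (fourierNode n k)) '' T) :=
    colSpan_hankel_eq_span hnode.injOn (fun k hk => (hsupp k).mpr hk) (by omega) fun j => by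
      rw [hy, partialFourier_mulVec_eq_sum fun k hk => not_not.mp (mt (hsupp k).mp hk)]
  refine ⟨Set.ext fun k => ?_, by omega⟩
  have hcol : (WithLp.toLp 2 (fun p : Fin L => partialFourier m n ⟨p.1, by omega⟩ k) :
      EuclideanSpace ℂ (Fin L)) = powVec L (fourierNode n k) := by
    ext p
    exact partialFourier_apply m n _ k
  rw [Set.mem_ofPred_eq, hcol, hspan, sinAngle_eq_zero_iff (powVec_ne_zero (by omega) _),
    powVec_mem_span_image_iff hnode (by omega), Finset.mem_coe]
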